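/- Let n ≥ 2 and let F : ℝⁿ → ℝⁿ be a C¹ map. Suppose there exists ε > 0 such that: (1) every complex eigenvalue λ of JF(x), for every x ∈ ℝⁿ, satisfies |Re λ| ≥ ε or |Im λ| ≥ ε (i.e., Spec(F) ⊆ ℂ \ ((−ε, ε) × (−iε, iε))); and (2) either every eigenvalue of JF(x)+JF(x)^T is greater than ε for every x, or every eigenvalue of JF(x)+JF(x)^T is less than −ε for every x. Then F is injective. -/

import Mathlib

/-! A symmetric part `JF + JFᵀ` with spectrum on one side of `0` makes `JF(x)` definite as a
quadratic form, `⟪JF(x) v, v⟫ ≠ 0` for `v ≠ 0`. If `F a = F b` with `a ≠ b`, the mean value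
theorem applied to `y ↦ ⟪F y, a - b⟫` on the segment from `b` to `a` produces a point `c` with
`⟪JF(c) (a - b), a - b⟫ = ⟪F a - F b, a - b⟫ = 0`, a contradiction. -/

open Matrix

/-- The Jacobian matrix of a map `F : ℝⁿ → ℝⁿ` at a point `x`:
the matrix of the total (Fréchet) derivative of `F` at `x` in the standard basis. -/
noncomputable def jacobianMatrix {n : ℕ} (F : (Fin n → ℝ) → (Fin n → ℝ)) (x : Fin n → ℝ) :
    Matrix (Fin n) (Fin n) ℝ :=
  LinearMap.toMatrix' (fderiv ℝ F x).toLinearMap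

/-- `μ : ℂ` is a (complex) eigenvalue of the real matrix `A`. -/
def HasComplexEigenvalue {n : ℕ} (A : Matrix (Fin n) (Fin n) ℝ) (μ : ℂ) : Prop :=
  ∃ v : Fin n → ℂ, v ≠ 0 ∧ (A.map Complex.ofReal).mulVec v = μ • v

/-- `μ : ℝ` is a (real) eigenvalue of the real matrix `A`. -/
def HasRealEigenvalue {n : ℕ} (A : Matrix (Fin n) (Fin n) ℝ) (μ : ℝ) : Prop :=
  ∃ v : Fin n → ℝ, v ≠ 0 ∧ A.mulVec v = μ • v

theorem exists_dotProduct_sub_eq_fderiv {ι : Type*} [Fintype ι] {f : (ι → ℝ) → (ι → ℝ)}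
    (hf : Differentiable ℝ f) (a b : ι → ℝ) :
    ∃ c, (f a - f b) ⬝ᵥ (a - b) = fderiv ℝ f c (a - b) ⬝ᵥ (a - b) := by
  let ℓ : (ι → ℝ) →L[ℝ] ℝ := LinearMap.toContinuousLinearMap ((dotProductBilin ℝ ℝ).flip (a - b))
  have hℓ : ∀ y, ℓ y = y ⬝ᵥ (a - b) := fun _ => rfl
  obtain ⟨c, -, hc⟩ := domain_mvt (f := fun y => ℓ (f y)) (s := Set.univ) (x := b) (y := a)
    (fun x _ => (ℓ.hasFDerivAt.comp x (hf x).hasFDerivAt).hasFDerivWithinAt) convex_univ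
    (Set.mem_univ _) (Set.mem_univ _)
  rw [ContinuousLinearMap.comp_apply, ← map_sub, hℓ, hℓ] at hc
  exact ⟨c, hc⟩

theorem injective_of_dotProduct_fderiv_ne_zero {ι : Type*} [Fintype ι]
    {f : (ι → ℝ) → (ι → ℝ)} (hf : Differentiable ℝ f)
    (h : ∀ x v, v ≠ 0 → fderiv ℝ f x v ⬝ᵥ v ≠ 0) : Function.Injective f := by
  intro a b hab
  by_contra hne
  obtain ⟨c, hc⟩ := exists_dotProduct_sub_eq_fderiv hf a b
  rw [hab, sub_self, zero_dotProduct] at hc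
  exact h c (a - b) (sub_ne_zero.mpr hne) hc.symm

theorem HasRealEigenvalue.of_neg {n : ℕ} {A : Matrix (Fin n) (Fin n) ℝ} {μ : ℝ}
    (h : HasRealEigenvalue (-A) μ) : HasRealEigenvalue A (-μ) := by
  obtain ⟨v, hv, hAv⟩ := h
  exact ⟨v, hv, by rw [neg_smul, ← hAv, neg_mulVec, neg_neg]⟩

theorem Matrix.IsHermitian.posDef_of_hasRealEigenvalue_pos {n : ℕ}
    {A : Matrix (Fin n) (Fin n) ℝ} (hA : A.IsHermitian)
    (h : ∀ μ, HasRealEigenvalue A μ → 0 < μ) : A.PosDef :=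
  hA.posDef_iff_eigenvalues_pos.mpr fun i =>
    h _ ⟨_, by simpa using hA.eigenvectorBasis.orthonormal.ne_zero i,
      hA.mulVec_eigenvectorBasis i⟩

theorem Matrix.IsHermitian.dotProduct_mulVec_ne_zero {n : ℕ} {A : Matrix (Fin n) (Fin n) ℝ}
    (hA : A.IsHermitian)
    (h : (∀ μ, HasRealEigenvalue A μ → 0 < μ) ∨ (∀ μ, HasRealEigenvalue A μ → μ < 0))
    {v : Fin n → ℝ} (hv : v ≠ 0) : v ⬝ᵥ A *ᵥ v ≠ 0 := by
  rcases h with hpos | hneg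
  · exact ((hA.posDef_of_hasRealEigenvalue_pos hpos).dotProduct_mulVec_pos hv).ne'
  · have hnegA := hA.neg.posDef_of_hasRealEigenvalue_pos fun μ hμ =>
      neg_lt_zero.mp (hneg _ (HasRealEigenvalue.of_neg hμ))
    have := hnegA.dotProduct_mulVec_pos hv
    rw [star_trivial, neg_mulVec, dotProduct_neg] at this
    exact neg_ne_zero.mp this.ne'

theorem Matrix.isHermitian_add_transpose {n : Type*} (J : Matrix n n ℝ) :
    (J + Jᵀ).IsHermitian := by
  rw [IsHermitian, conjTranspose_eq_transpose_of_trivial, transpose_add, transpose_transpose,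
    add_comm]

theorem Matrix.dotProduct_add_transpose_mulVec {n : Type*} [Fintype n] (J : Matrix n n ℝ)
    (v : n → ℝ) : v ⬝ᵥ (J + Jᵀ) *ᵥ v = 2 * (J *ᵥ v ⬝ᵥ v) := by
  rw [add_mulVec, dotProduct_add, dotProduct_comm v (J *ᵥ v), dotProduct_mulVec,
    vecMul_transpose]
  ring

theorem mulVec_jacobianMatrix {n : ℕ} (F : (Fin n → ℝ) → (Fin n → ℝ)) (x v : Fin n → ℝ) :
    jacobianMatrix F x *ᵥ v = fderiv ℝ F x v := by
  rw [jacobianMatrix, ← Matrix.toLin'_apply, Matrix.toLin'_toMatrix']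
  rfl

theorem injective_of_spec_off_square_and_symmetric_spec_bounded_away_general
    {n : ℕ} (F : (Fin n → ℝ) → (Fin n → ℝ)) (hF : ContDiff ℝ 1 F)
    (hspec : ∃ ε > (0 : ℝ),
      (∀ x : Fin n → ℝ, ∀ μ : ℂ, HasComplexEigenvalue (jacobianMatrix F x) μ →
        ε ≤ |μ.re| ∨ ε ≤ |μ.im|) ∧
      ((∀ x : Fin n → ℝ, ∀ μ : ℝ,
          HasRealEigenvalue (jacobianMatrix F x + (jacobianMatrix F x)ᵀ) μ → ε < μ) ∨
       (∀ x : Fin n → ℝ, ∀ μ : ℝ,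
          HasRealEigenvalue (jacobianMatrix F x + (jacobianMatrix F x)ᵀ) μ → μ < -ε))) :
    Function.Injective F := by
  obtain ⟨ε, hε, -, hsym⟩ := hspec
  refine injective_of_dotProduct_fderiv_ne_zero (hF.differentiable one_ne_zero) fun x v hv => ?_
  have hdef := (isHermitian_add_transpose (jacobianMatrix F x)).dotProduct_mulVec_ne_zero
    (hsym.imp (fun hpos μ hμ => hε.trans (hpos x μ hμ))
      (fun hneg μ hμ => (hneg x μ hμ).trans (neg_neg_of_pos hε))) hv
  rw [dotProduct_add_transpose_mulVec, mulVec_jacobianMatrix] at hdef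
  exact right_ne_zero_of_mul hdef

/-- Let `F : ℝⁿ → ℝⁿ` (n ≥ 2) be `C¹`. Suppose there is `ε > 0` such that
(1) every complex eigenvalue `μ` of `JF(x)` satisfies `|Re μ| ≥ ε` or `|Im μ| ≥ ε`, for
every `x`; and (2) either every eigenvalue of `JF(x)+JF(x)ᵀ` is greater than `ε` for every
`x`, or every eigenvalue of `JF(x)+JF(x)ᵀ` is less than `-ε` for every `x`. Then `F` is
injective. -/
theorem injective_of_spec_off_square_and_symmetric_spec_bounded_away
    {n : ℕ} (hn : 2 ≤ n) (F : (Fin n → ℝ) → (Fin n → ℝ)) (hF : ContDiff ℝ 1 F)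
    (hspec : ∃ ε > (0 : ℝ),
      (∀ x : Fin n → ℝ, ∀ μ : ℂ, HasComplexEigenvalue (jacobianMatrix F x) μ →
        ε ≤ |μ.re| ∨ ε ≤ |μ.im|) ∧
      ((∀ x : Fin n → ℝ, ∀ μ : ℝ,
          HasRealEigenvalue (jacobianMatrix F x + (jacobianMatrix F x)ᵀ) μ → ε < μ) ∨
       (∀ x : Fin n → ℝ, ∀ μ : ℝ,
          HasRealEigenvalue (jacobianMatrix F x + (jacobianMatrix F x)ᵀ) μ → μ < -ε))) :
    Function.Injective F :=
  injective_of_spec_off_square_and_symmetric_spec_bounded_away_general F hF hspec
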